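/- arXiv:2502.05058 — 4 statements merged into one kernel-verified Lean document; each statement's English description precedes it below -/
import Mathlib

section
/- A transitive piecewise continuous monotone interval map f : [0,1] → [0,1] does not have shadowing. -/
open Set Filter

/-- `f : [0,1] → [0,1]` is a piecewise continuous monotone interval map. -/
def IsPCMMap (f : ℝ → ℝ) : Prop :=
  ∃ (n : ℕ) (z : ℕ → ℝ), 1 ≤ n ∧ z 0 = 0 ∧ z (n + 1) = 1 ∧
    (∀ i j, i < j → j ≤ n + 1 → z i < z j) ∧
    (∀ i ≤ n, ContinuousOn f (Ioo (z i) (z (i + 1))) ∧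
      (StrictMonoOn f (Ioo (z i) (z (i + 1))) ∨ StrictAntiOn f (Ioo (z i) (z (i + 1))))) ∧
    (∀ j, 1 ≤ j → j ≤ n → ∃ L R : ℝ,
      Tendsto f (nhdsWithin (z j) (Iio (z j))) (nhds L) ∧
      Tendsto f (nhdsWithin (z j) (Ioi (z j))) (nhds R) ∧ L ≠ R)

/-- `f` is transitive on `[0,1]`. -/
def IntervalTransitive (f : ℝ → ℝ) : Prop :=
  ∀ a b : ℝ, a < b → Ioo a b ⊆ Icc 0 1 →
    ∃ m : ℕ, Ioo (0:ℝ) 1 ⊆ ⋃ k ≤ m, f^[k] '' Ioo a b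

/-- `f` has shadowing on `K` (infinite pseudo-orbits). -/
def ShadowingOn (f : ℝ → ℝ) (K : Set ℝ) : Prop :=
  ∀ ε > (0:ℝ), ∃ δ > (0:ℝ), ∀ x : ℕ → ℝ, (∀ i, x i ∈ K) →
    (∀ i, |f (x i) - x (i + 1)| < δ) →
    ∃ z ∈ K, ∀ i, |f^[i] z - x i| < ε

/-!
Suppose `f` had shadowing, and fix a small `ε` with its `δ`. Off the countable set of points
whose orbits meet a break point, `f` is `2ε`-expansive: two `2ε`-close orbits stay in common
pieces, so the interval between them is mapped monotonically forever and never covers the break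
point `z 1`, against transitivity. Consequently a pseudo-orbit cannot force all shadows of its
continuations to avoid a whole interval of possible next points.

Start beside the discontinuity `z 1`, on a side whose one-sided limit `M` differs from
`f (z 1)`, and jump next to `M`. All shadows start on that side, so their images lie on one side
of `M`, and the targets on the other side are excluded; hence `M` is `0` or `1` and the shadow
lies strictly inside next to it. Repeating this at the endpoint (a jump of `f` there is excluded
directly), the pseudo-orbit follows the orbit of an endpoint through `{0, 1}` while the shadow
stays strictly inside next to it, so once more the interval between them never reaches `z 1`.
-/

open Topology Function

lemma eventually_const_mul_lt (k : ℝ) {ρ : ℝ} (hρ : 0 < ρ) :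
    ∀ᶠ ε in 𝓝[>] (0 : ℝ), k * ε < ρ := by
  have : Tendsto (fun ε : ℝ => k * ε) (𝓝[>] 0) (𝓝 0) := by
    simpa using ((continuous_const_mul k).tendsto 0).mono_left nhdsWithin_le_nhds
  exact this.eventually (gt_mem_nhds hρ)

lemma eventually_mem_Icc_sub {c : ℝ} (hc : c ∈ Ioo 0 1) :
    ∀ᶠ ε in 𝓝[>] (0 : ℝ), c ∈ Icc ε (1 - ε) := by
  filter_upwards [eventually_const_mul_lt 1 hc.1, eventually_const_mul_lt 1 (sub_pos.2 hc.2)]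
    with ε h1 h2
  constructor <;> linarith

lemma mapsTo_uIoo_of_strictMonoOn_or_strictAntiOn {f : ℝ → ℝ} {a b : ℝ}
    (h : StrictMonoOn f (uIcc a b) ∨ StrictAntiOn f (uIcc a b)) :
    MapsTo f (uIoo a b) (uIoo (f a) (f b)) := by
  wlog hab : a ≤ b generalizing a b
  · rw [uIoo_comm, uIoo_comm (f a)]
    exact this (by rwa [uIcc_comm]) (le_of_not_ge hab)
  rw [uIcc_of_le hab] at h
  rw [uIoo_of_le hab]
  rcases h with h | h
  exacts [h.mapsTo_Ioo.mono_right Ioo_subset_uIoo, h.mapsTo_Ioo.mono_right Ioo_subset_uIoo']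

theorem IntervalTransitive.exists_mem_uIoo_iterate {f : ℝ → ℝ} (htr : IntervalTransitive f)
    {c u v : ℝ} (hc : c ∈ Ioo 0 1) (hu : u ∈ Icc 0 1) (hv : v ∈ Icc 0 1) (huv : u ≠ v)
    (hmaps : ∀ k, MapsTo f (uIoo (f^[k] u) (f^[k] v)) (uIoo (f^[k + 1] u) (f^[k + 1] v))) :
    ∃ k, c ∈ uIoo (f^[k] u) (f^[k] v) := by
  obtain ⟨m, hm⟩ := htr (u ⊓ v) (u ⊔ v) (inf_lt_sup.2 huv)
    (uIoo_subset_uIcc_self.trans (uIcc_subset_Icc hu hv))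
  have hcm := hm hc
  simp only [mem_iUnion, mem_image] at hcm
  obtain ⟨k, -, y, hy, rfl⟩ := hcm
  have hiter : ∀ k, MapsTo f^[k] (uIoo u v) (uIoo (f^[k] u) (f^[k] v)) := by
    intro k
    induction k with
    | zero => exact mapsTo_id _
    | succ k ih =>
      have := (hmaps k).comp ih
      rwa [← iterate_succ'] at this
  exact ⟨k, hiter k hy⟩

lemma countable_setOf_exists_iterate_mem {α : Type*} {f : α → α} {S B : Set α}
    (hS : MapsTo f S S) (hfib : ∀ y, {x ∈ S | f x = y}.Countable) (hB : B.Countable) :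
    {x ∈ S | ∃ k, f^[k] x ∈ B}.Countable := by
  have hpre : ∀ C : Set α, C.Countable → {x ∈ S | f x ∈ C}.Countable := by
    refine fun C hC => (hC.biUnion fun y _ => hfib y).mono fun x hx => ?_
    exact mem_iUnion₂.2 ⟨f x, hx.2, hx.1, rfl⟩
  have hk : ∀ k, {x ∈ S | f^[k] x ∈ B}.Countable := by
    intro k
    induction k with
    | zero => exact hB.mono fun x hx => hx.2
    | succ k ih =>
      refine (hpre _ ih).mono fun x hx => And.intro hx.1 (And.intro (hS hx.1) ?_)
      rw [← iterate_succ_apply]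
      exact hx.2
  refine (countable_iUnion hk).mono fun x hx => ?_
  obtain ⟨k, hk⟩ := hx.2
  exact mem_iUnion.2 ⟨k, hx.1, hk⟩


section OneSidedLimits

variable {f : ℝ → ℝ} {a b y M : ℝ}

lemma StrictMonoOn.lt_of_tendsto_nhdsLT (hf : StrictMonoOn f (Ioo a b))
    (hM : Tendsto f (𝓝[<] b) (𝓝 M)) (hy : y ∈ Ioo a b) : f y < M := by
  obtain ⟨y', hyy', hy'b⟩ := exists_between hy.2
  have hy' : y' ∈ Ioo a b := ⟨hy.1.trans hyy', hy'b⟩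
  refine (hf hy hy' hyy').trans_le (ge_of_tendsto hM ?_)
  filter_upwards [Ioo_mem_nhdsLT hy'b] with x hx
  exact (hf hy' ⟨hy'.1.trans hx.1, hx.2⟩ hx.1).le

lemma StrictAntiOn.lt_of_tendsto_nhdsLT (hf : StrictAntiOn f (Ioo a b))
    (hM : Tendsto f (𝓝[<] b) (𝓝 M)) (hy : y ∈ Ioo a b) : M < f y := by
  obtain ⟨y', hyy', hy'b⟩ := exists_between hy.2
  have hy' : y' ∈ Ioo a b := ⟨hy.1.trans hyy', hy'b⟩
  refine (le_of_tendsto hM ?_).trans_lt (hf hy hy' hyy')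
  filter_upwards [Ioo_mem_nhdsLT hy'b] with x hx
  exact (hf hy' ⟨hy'.1.trans hx.1, hx.2⟩ hx.1).le

lemma StrictMonoOn.lt_of_tendsto_nhdsGT (hf : StrictMonoOn f (Ioo a b))
    (hM : Tendsto f (𝓝[>] a) (𝓝 M)) (hy : y ∈ Ioo a b) : M < f y := by
  obtain ⟨y', hay', hy'y⟩ := exists_between hy.1
  have hy' : y' ∈ Ioo a b := ⟨hay', hy'y.trans hy.2⟩
  refine (le_of_tendsto hM ?_).trans_lt (hf hy' hy hy'y)
  filter_upwards [Ioo_mem_nhdsGT hay'] with x hx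
  exact (hf ⟨hx.1, hx.2.trans hy'.2⟩ hy' hx.2).le

lemma StrictAntiOn.lt_of_tendsto_nhdsGT (hf : StrictAntiOn f (Ioo a b))
    (hM : Tendsto f (𝓝[>] a) (𝓝 M)) (hy : y ∈ Ioo a b) : f y < M := by
  obtain ⟨y', hay', hy'y⟩ := exists_between hy.1
  have hy' : y' ∈ Ioo a b := ⟨hay', hy'y.trans hy.2⟩
  refine (hf hy' hy hy'y).trans_le (ge_of_tendsto hM ?_)
  filter_upwards [Ioo_mem_nhdsGT hay'] with x hx
  exact (hf ⟨hx.1, hx.2.trans hy'.2⟩ hy' hx.2).le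

end OneSidedLimits

structure IsMonotoneBranch (f : ℝ → ℝ) (a b e M : ℝ) : Prop where
  lt : a < b
  endpoint : e = a ∨ e = b
  strictMonoOn_or_strictAntiOn : StrictMonoOn f (Ioo a b) ∨ StrictAntiOn f (Ioo a b)
  tendsto : Tendsto f (𝓝[Ioo a b] e) (𝓝 M)

lemma exists_isMonotoneBranch {f : ℝ → ℝ} {a b e : ℝ} (hab : a < b) (he : e = a ∨ e = b)
    (hf : StrictMonoOn f (Ioo a b) ∨ StrictAntiOn f (Ioo a b))
    (hbdd : Bornology.IsBounded (f '' Ioo a b)) : ∃ M, IsMonotoneBranch f a b e M := by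
  have hne : (Ioo a b).Nonempty := nonempty_Ioo.2 hab
  have hbddA := hbdd.bddAbove
  have hbddB := hbdd.bddBelow
  suffices ∃ M, Tendsto f (𝓝[Ioo a b] e) (𝓝 M) from this.imp fun M hM => ⟨hab, he, hf, hM⟩
  rcases he with rfl | rfl
  · rw [nhdsWithin_Ioo_eq_nhdsGT hab]
    rcases hf with hf | hf
    exacts [⟨_, hf.monotoneOn.tendsto_nhdsWithin_Ioo_right hne hbddB⟩,
      ⟨_, hf.antitoneOn.tendsto_nhdsWithin_Ioo_right hne hbddA⟩]
  · rw [nhdsWithin_Ioo_eq_nhdsLT hab]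
    rcases hf with hf | hf
    exacts [⟨_, hf.monotoneOn.tendsto_nhdsWithin_Ioo_left hne hbddA⟩,
      ⟨_, hf.antitoneOn.tendsto_nhdsWithin_Ioo_left hne hbddB⟩]

namespace IsMonotoneBranch

variable {f : ℝ → ℝ} {a b e M : ℝ}

lemma forall_lt_or_forall_gt (h : IsMonotoneBranch f a b e M) :
    (∀ y ∈ Ioo a b, f y < M) ∨ (∀ y ∈ Ioo a b, M < f y) := by
  obtain ⟨hab, rfl | rfl, hf | hf, hM⟩ := h
  · rw [nhdsWithin_Ioo_eq_nhdsGT hab] at hM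
    exact Or.inr fun y hy => hf.lt_of_tendsto_nhdsGT hM hy
  · rw [nhdsWithin_Ioo_eq_nhdsGT hab] at hM
    exact Or.inl fun y hy => hf.lt_of_tendsto_nhdsGT hM hy
  · rw [nhdsWithin_Ioo_eq_nhdsLT hab] at hM
    exact Or.inl fun y hy => hf.lt_of_tendsto_nhdsLT hM hy
  · rw [nhdsWithin_Ioo_eq_nhdsLT hab] at hM
    exact Or.inr fun y hy => hf.lt_of_tendsto_nhdsLT hM hy

lemma ne_of_mem (h : IsMonotoneBranch f a b e M) {y : ℝ} (hy : y ∈ Ioo a b) : f y ≠ M := by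
  rcases h.forall_lt_or_forall_gt with h | h
  exacts [(h y hy).ne, (h y hy).ne']

lemma strictMonoOn_insert_or_strictAntiOn_insert (h : IsMonotoneBranch f a b e (f e)) :
    StrictMonoOn f (insert e (Ioo a b)) ∨ StrictAntiOn f (insert e (Ioo a b)) := by
  obtain ⟨hab, rfl | rfl, hf | hf, hM⟩ := h
  all_goals first
    | rw [nhdsWithin_Ioo_eq_nhdsGT hab] at hM
    | rw [nhdsWithin_Ioo_eq_nhdsLT hab] at hM
  · exact Or.inl ((strictMonoOn_insert_iff_of_forall_ge fun x hx => hx.1.le).2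
      ⟨fun y hy _ => hf.lt_of_tendsto_nhdsGT hM hy, hf⟩)
  · exact Or.inr ((strictAntiOn_insert_iff_of_forall_ge fun x hx => hx.1.le).2
      ⟨fun y hy _ => hf.lt_of_tendsto_nhdsGT hM hy, hf⟩)
  · exact Or.inl ((strictMonoOn_insert_iff_of_forall_le fun x hx => hx.2.le).2
      ⟨fun y hy _ => hf.lt_of_tendsto_nhdsLT hM hy, hf⟩)
  · exact Or.inr ((strictAntiOn_insert_iff_of_forall_le fun x hx => hx.2.le).2
      ⟨fun y hy _ => hf.lt_of_tendsto_nhdsLT hM hy, hf⟩)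

lemma uIcc_subset_insert (h : IsMonotoneBranch f a b e M) {y : ℝ} (hy : y ∈ Ioo a b) :
    uIcc y e ⊆ insert e (Ioo a b) := by
  intro x hx
  rcases eq_or_ne x e with rfl | hxe
  · exact mem_insert _ _
  refine mem_insert_of_mem _ ?_
  rcases h.endpoint with rfl | rfl
  · rw [uIcc_comm, uIcc_of_le hy.1.le] at hx
    exact ⟨lt_of_le_of_ne hx.1 hxe.symm, hx.2.trans_lt hy.2⟩
  · rw [uIcc_of_le hy.2.le] at hx
    exact ⟨hy.1.trans_le hx.1, lt_of_le_of_ne hx.2 hxe⟩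

lemma neBot (h : IsMonotoneBranch f a b e M) : (𝓝[Ioo a b] e).NeBot := by
  rcases h.endpoint with rfl | rfl
  · rw [nhdsWithin_Ioo_eq_nhdsGT h.lt]; infer_instance
  · rw [nhdsWithin_Ioo_eq_nhdsLT h.lt]; infer_instance

lemma mem_of_mapsTo (h : IsMonotoneBranch f a b e M) {K : Set ℝ} (hK : IsClosed K)
    (hf : MapsTo f (Ioo a b) K) : M ∈ K :=
  haveI := h.neBot
  hK.mem_of_tendsto h.tendsto (eventually_mem_nhdsWithin.mono hf)

lemma exists_near (h : IsMonotoneBranch f a b e M) {r η : ℝ} (hr : 0 < r) (hη : 0 < η) :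
    ∃ p ∈ Ioo a b, |p - e| < r ∧ |f p - M| < η :=
  haveI := h.neBot
  (eventually_mem_nhdsWithin.and ((eventually_nhdsWithin_of_eventually_nhds
    (eventually_abs_sub_lt e hr)).and (h.tendsto.eventually (eventually_abs_sub_lt M hη)))).exists

end IsMonotoneBranch

section Eventually

variable {f : ℝ → ℝ}

lemma eventually_le_abs_sub_of_tendsto {s : Set ℝ} {e M V : ℝ} (hM : Tendsto f (𝓝[s] e) (𝓝 M))
    (hV : V ≠ M) : ∀ᶠ ε in 𝓝[>] (0 : ℝ), ∀ y ∈ s, |y - e| < 3 * ε → 3 * ε ≤ |f y - V| := by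
  have hr : 0 < |V - M| / 2 := half_pos (abs_pos.2 (sub_ne_zero.2 hV))
  obtain ⟨ρ, hρ, hclose⟩ := Metric.tendsto_nhdsWithin_nhds.1 hM _ hr
  filter_upwards [eventually_const_mul_lt 3 hρ, eventually_const_mul_lt 3 hr] with ε hερ hεr
    y hy hye
  have hyM := hclose hy (by rw [Real.dist_eq]; linarith)
  rw [Real.dist_eq] at hyM
  have := abs_sub_le V (f y) M
  rw [abs_sub_comm V (f y)] at this
  linarith

lemma eventually_le_abs_sub_of_jump {c L R : ℝ} (hL : Tendsto f (𝓝[<] c) (𝓝 L))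
    (hR : Tendsto f (𝓝[>] c) (𝓝 R)) (hLR : L ≠ R) :
    ∀ᶠ ε in 𝓝[>] (0 : ℝ), ∀ a b, a < c → c < b → b - a < 2 * ε → 2 * ε ≤ |f a - f b| := by
  have hr : 0 < |L - R| / 3 := div_pos (abs_pos.2 (sub_ne_zero.2 hLR)) three_pos
  obtain ⟨ρL, hρL, hcloseL⟩ := Metric.tendsto_nhdsWithin_nhds.1 hL _ hr
  obtain ⟨ρR, hρR, hcloseR⟩ := Metric.tendsto_nhdsWithin_nhds.1 hR _ hr
  filter_upwards [eventually_const_mul_lt 2 hρL, eventually_const_mul_lt 2 hρR,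
    eventually_const_mul_lt 2 hr] with ε hεL hεR hεr a b hac hcb hab
  have haL := hcloseL hac (by rw [Real.dist_eq, abs_sub_lt_iff]; constructor <;> linarith)
  have hbR := hcloseR hcb (by rw [Real.dist_eq, abs_sub_lt_iff]; constructor <;> linarith)
  rw [Real.dist_eq] at haL hbR
  have h1 := abs_sub_le L (f a) R
  have h2 := abs_sub_le (f a) (f b) R
  rw [abs_sub_comm L (f a)] at h1
  linarith

lemma eventually_mem_of_abs_sub_lt {c M₁ M₂ : ℝ} {J₁ J₂ : Set ℝ}
    (hU : insert c (J₁ ∪ J₂) ∈ 𝓝 c) (h₂ : Tendsto f (𝓝[J₂] c) (𝓝 M₂)) (hM : M₁ ≠ M₂)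
    (hc : f c ≠ M₁) :
    ∀ᶠ ε in 𝓝[>] (0 : ℝ), ∀ y, |y - c| < 2 * ε → |f y - M₁| < 3 * ε → y ∈ J₁ := by
  obtain ⟨ρ, hρ, hball⟩ := Metric.mem_nhds_iff.1 hU
  filter_upwards [eventually_const_mul_lt 2 hρ, eventually_le_abs_sub_of_tendsto h₂ hM,
    eventually_const_mul_lt 3 (abs_pos.2 (sub_ne_zero.2 hc)), self_mem_nhdsWithin]
    with ε hερ hJ₂ hεc (hε : 0 < ε) y hyc hyM
  have hy : y ∈ insert c (J₁ ∪ J₂) := hball (by rw [Metric.mem_ball, Real.dist_eq]; linarith)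
  rcases hy with rfl | hy | hy
  · linarith
  · exact hy
  · linarith [hJ₂ y hy (by linarith)]

end Eventually

def collar (e ε : ℝ) : Set ℝ := {y | y ∈ Icc 0 1 ∧ |y - e| < ε ∧ y ≠ e}

def HasCollarBranch (f : ℝ → ℝ) (ε e : ℝ) : Prop :=
  ∃ a b M, IsMonotoneBranch f a b e M ∧ collar e ε ⊆ Ioo a b ∧
    (f e ≠ M → ∀ y ∈ collar e ε, ε ≤ |f y - f e|)

lemma IsMonotoneBranch.eventually_hasCollarBranch {f : ℝ → ℝ} {a b e M : ℝ}
    (hB : IsMonotoneBranch f a b e M) (hsub : ∀ᶠ ε in 𝓝[>] (0 : ℝ), collar e ε ⊆ Ioo a b) :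
    ∀ᶠ ε in 𝓝[>] (0 : ℝ), HasCollarBranch f ε e := by
  by_cases hM : f e = M
  · exact hsub.mono fun ε hε => ⟨a, b, M, hB, hε, fun h => absurd hM h⟩
  filter_upwards [hsub, eventually_le_abs_sub_of_tendsto hB.tendsto hM] with ε hε hfar
  refine ⟨a, b, M, hB, hε, fun _ y hy => ?_⟩
  have := hfar y (hε hy) (by linarith [hy.2.1, abs_nonneg (y - e)])
  linarith [hy.2.1, abs_nonneg (y - e)]

def ExpansiveOff (f : ℝ → ℝ) (r : ℝ) (B : Set ℝ) : Prop :=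
  ∀ α ∈ Icc (0 : ℝ) 1 \ B, ∀ β ∈ Icc (0 : ℝ) 1 \ B, (∀ k, |f^[k] α - f^[k] β| < r) → α = β

structure PCMPartition (f : ℝ → ℝ) where
  n : ℕ
  z : ℕ → ℝ
  one_le : 1 ≤ n
  z_zero : z 0 = 0
  z_last : z (n + 1) = 1
  z_lt : ∀ i j, i < j → j ≤ n + 1 → z i < z j
  strictMonoOn_or_strictAntiOn : ∀ i ≤ n,
    StrictMonoOn f (Ioo (z i) (z (i + 1))) ∨ StrictAntiOn f (Ioo (z i) (z (i + 1)))
  jump : ∀ j, 1 ≤ j → j ≤ n → ∃ L R : ℝ,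
    Tendsto f (𝓝[<] (z j)) (𝓝 L) ∧ Tendsto f (𝓝[>] (z j)) (𝓝 R) ∧ L ≠ R

lemma IsPCMMap.nonempty_pcmPartition {f : ℝ → ℝ} (h : IsPCMMap f) :
    Nonempty (PCMPartition f) := by
  obtain ⟨n, z, hn, h0, h1, hlt, hmono, hjump⟩ := h
  exact ⟨⟨n, z, hn, h0, h1, hlt, fun i hi => (hmono i hi).2, hjump⟩⟩

namespace PCMPartition

variable {f : ℝ → ℝ} (P : PCMPartition f)

def piece (t : ℕ) : Set ℝ := Ioo (P.z t) (P.z (t + 1))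

def breaks : Set ℝ := P.z '' Iic (P.n + 1)

lemma z_le {i j : ℕ} (hij : i ≤ j) (hj : j ≤ P.n + 1) : P.z i ≤ P.z j :=
  hij.eq_or_lt.elim (fun h => h ▸ le_rfl) fun h => (P.z_lt i j h hj).le

lemma lt_of_z_lt {i j : ℕ} (hi : i ≤ P.n + 1) (h : P.z i < P.z j) : i < j :=
  lt_of_not_ge fun hji => (P.z_le hji hi).not_gt h

lemma z_mem_Icc {j : ℕ} (hj : j ≤ P.n + 1) : P.z j ∈ Icc 0 1 :=
  ⟨P.z_zero ▸ P.z_le (Nat.zero_le j) hj, P.z_last ▸ P.z_le hj le_rfl⟩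

lemma Ioo_subset_Icc {t : ℕ} (ht : t ≤ P.n) : Ioo (P.z t) (P.z (t + 1)) ⊆ Icc 0 1 :=
  Ioo_subset_Icc_self.trans (Icc_subset_Icc (P.z_mem_Icc (by omega)).1 (P.z_mem_Icc (by omega)).2)

lemma z_mem_breaks {j : ℕ} (hj : j ≤ P.n + 1) : P.z j ∈ P.breaks :=
  mem_image_of_mem _ (mem_Iic.2 hj)

lemma z_one_mem_Ioo : P.z 1 ∈ Ioo 0 1 :=
  ⟨P.z_zero ▸ P.z_lt 0 1 one_pos (by have := P.one_le; omega),
    P.z_last ▸ P.z_lt 1 (P.n + 1) (by have := P.one_le; omega) le_rfl⟩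

lemma z_one_not_mem_piece {t : ℕ} (ht : t ≤ P.n) : P.z 1 ∉ P.piece t := fun h => by
  obtain rfl : t = 0 := Nat.lt_one_iff.1 (P.lt_of_z_lt (by omega) h.1)
  exact h.2.false

lemma exists_mem_piece {x : ℝ} (hx : x ∈ Icc 0 1) (hxb : x ∉ P.breaks) :
    ∃ t ≤ P.n, x ∈ P.piece t := by
  have hne : ∀ j ≤ P.n + 1, x ≠ P.z j := fun j hj h => hxb (h ▸ P.z_mem_breaks hj)
  have h0 : P.z 0 < x := lt_of_le_of_ne (P.z_zero ▸ hx.1) (hne 0 (Nat.zero_le _)).symm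
  obtain ⟨t, ht, hzt, hmax⟩ : ∃ t ≤ P.n, P.z t < x ∧ ∀ k, t < k → k ≤ P.n → ¬ P.z k < x :=
    ⟨_, Nat.findGreatest_le _, Nat.findGreatest_spec (P := fun t => P.z t < x) (Nat.zero_le _) h0,
      fun _ hk hkn => Nat.findGreatest_is_greatest hk hkn⟩
  have hnext : ¬ P.z (t + 1) < x := by
    rcases ht.eq_or_lt with rfl | h
    · rw [P.z_last]; exact hx.2.not_gt
    · exact hmax _ (Nat.lt_succ_self t) h
  exact ⟨t, ht, hzt, lt_of_le_of_ne (not_lt.1 hnext) (hne _ (by omega))⟩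

lemma breaks_finite : P.breaks.Finite := (finite_Iic _).image _

lemma countable_setOf_exists_iterate_mem_breaks (hf : MapsTo f (Icc 0 1) (Icc 0 1)) :
    {x ∈ Icc 0 1 | ∃ k, f^[k] x ∈ P.breaks}.Countable := by
  refine countable_setOf_exists_iterate_mem hf (fun y => ?_) P.breaks_finite.countable
  have hfib : ∀ t ≤ P.n, {x ∈ P.piece t | f x = y}.Subsingleton := fun t ht x hx x' hx' =>
    ((P.strictMonoOn_or_strictAntiOn t ht).elim StrictMonoOn.injOn StrictAntiOn.injOn)
      hx.1 hx'.1 (hx.2.trans hx'.2.symm)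
  refine (P.breaks_finite.countable.union
    ((finite_Iic P.n).countable.biUnion fun t ht => (hfib t ht).countable)).mono fun x hx => ?_
  by_cases hxb : x ∈ P.breaks
  · exact Or.inl hxb
  · obtain ⟨t, ht, hxt⟩ := P.exists_mem_piece hx.1 hxb
    exact Or.inr (mem_iUnion₂.2 ⟨t, ht, hxt, hx.2⟩)

lemma eventually_exists_piece :
    ∀ᶠ ε in 𝓝[>] (0 : ℝ), ∀ a ∈ Icc 0 1 \ P.breaks, ∀ b ∈ Icc 0 1 \ P.breaks,
      |a - b| < 2 * ε → |f a - f b| < 2 * ε → ∃ t ≤ P.n, a ∈ P.piece t ∧ b ∈ P.piece t := by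
  have hjumps : ∀ᶠ ε in 𝓝[>] (0 : ℝ), ∀ j ∈ Finset.Icc 1 P.n, ∀ a b, a < P.z j → P.z j < b →
      b - a < 2 * ε → 2 * ε ≤ |f a - f b| := by
    refine (eventually_all_finset _).2 fun j hj => ?_
    obtain ⟨hj1, hjn⟩ := Finset.mem_Icc.1 hj
    obtain ⟨L, R, hL, hR, hLR⟩ := P.jump j hj1 hjn
    exact eventually_le_abs_sub_of_jump hL hR hLR
  filter_upwards [hjumps] with ε hε a ha b hb hab hfab
  have key : ∀ {a b : ℝ} {t t' : ℕ}, t' ≤ P.n → a ∈ P.piece t → b ∈ P.piece t' → t < t' →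
      |a - b| < 2 * ε → 2 * ε ≤ |f a - f b| := fun ht' hat hbt htt' hab =>
    hε _ (Finset.mem_Icc.2 ⟨by omega, ht'⟩) _ _ (hat.2.trans_le (P.z_le htt' (by omega))) hbt.1
      (abs_sub_lt_iff.1 hab).2
  obtain ⟨t, ht, hat⟩ := P.exists_mem_piece ha.1 ha.2
  obtain ⟨t', ht', hbt⟩ := P.exists_mem_piece hb.1 hb.2
  refine ⟨t, ht, hat, ?_⟩
  rcases lt_trichotomy t t' with h | rfl | h
  · exact absurd (key ht' hat hbt h hab) (not_le.2 hfab)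
  · exact hbt
  · rw [abs_sub_comm] at hab hfab
    exact absurd (key ht hbt hat h hab) (not_le.2 hfab)

lemma eventually_expansiveOff (htr : IntervalTransitive f) (hf : MapsTo f (Icc 0 1) (Icc 0 1)) :
    ∀ᶠ ε in 𝓝[>] (0 : ℝ),
      ExpansiveOff f (2 * ε) {x ∈ Icc 0 1 | ∃ k, f^[k] x ∈ P.breaks} := by
  filter_upwards [P.eventually_exists_piece] with ε hε α hα β hβ hclose
  by_contra hne
  have hgood : ∀ x ∈ Icc 0 1 \ {x ∈ Icc 0 1 | ∃ k, f^[k] x ∈ P.breaks}, ∀ k,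
      f^[k] x ∈ Icc 0 1 \ P.breaks := fun x hx k => ⟨hf.iterate k hx.1, fun h => hx.2 ⟨hx.1, k, h⟩⟩
  have hsame : ∀ k, ∃ t ≤ P.n, f^[k] α ∈ P.piece t ∧ f^[k] β ∈ P.piece t := fun k =>
    hε _ (hgood α hα k) _ (hgood β hβ k) (hclose k)
      (by simpa only [iterate_succ_apply'] using hclose (k + 1))
  obtain ⟨k, hk⟩ := htr.exists_mem_uIoo_iterate P.z_one_mem_Ioo hα.1 hβ.1 hne fun k => by
    obtain ⟨t, ht, hαt, hβt⟩ := hsame k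
    have hsub : uIcc (f^[k] α) (f^[k] β) ⊆ P.piece t := ordConnected_Ioo.uIcc_subset hαt hβt
    simpa only [iterate_succ_apply'] using mapsTo_uIoo_of_strictMonoOn_or_strictAntiOn
      ((P.strictMonoOn_or_strictAntiOn t ht).imp (·.mono hsub) (·.mono hsub))
  obtain ⟨t, ht, hαt, hβt⟩ := hsame k
  exact P.z_one_not_mem_piece ht (ordConnected_Ioo.uIcc_subset hαt hβt (uIoo_subset_uIcc_self hk))

lemma eventually_hasCollarBranch (P : PCMPartition f) (hf : MapsTo f (Icc 0 1) (Icc 0 1)) :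
    ∀ᶠ ε in 𝓝[>] (0 : ℝ), ∀ e ∈ ({0, 1} : Set ℝ), HasCollarBranch f ε e := by
  have hn := P.one_le
  obtain ⟨M₀, hB₀⟩ := exists_isMonotoneBranch (P.z_lt 0 1 one_pos (by omega))
    (Or.inl P.z_zero.symm) (P.strictMonoOn_or_strictAntiOn 0 (Nat.zero_le _))
    ((Metric.isBounded_Icc 0 1).subset
      (hf.mono_left (P.Ioo_subset_Icc (Nat.zero_le _))).image_subset)
  obtain ⟨M₁, hB₁⟩ := exists_isMonotoneBranch (P.z_lt P.n (P.n + 1) (by omega) le_rfl)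
    (Or.inr P.z_last.symm) (P.strictMonoOn_or_strictAntiOn P.n le_rfl)
    ((Metric.isBounded_Icc 0 1).subset (hf.mono_left (P.Ioo_subset_Icc le_rfl)).image_subset)
  have hcollar₀ : ∀ᶠ ε in 𝓝[>] (0 : ℝ), collar 0 ε ⊆ Ioo (P.z 0) (P.z 1) := by
    filter_upwards [eventually_const_mul_lt 1 P.z_one_mem_Ioo.1] with ε hε y hy
    obtain ⟨hy01, hyε, hy0⟩ := hy
    rw [sub_zero, abs_of_nonneg hy01.1] at hyε
    exact ⟨P.z_zero ▸ lt_of_le_of_ne hy01.1 (Ne.symm hy0), by linarith⟩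
  have hcollar₁ : ∀ᶠ ε in 𝓝[>] (0 : ℝ), collar 1 ε ⊆ Ioo (P.z P.n) (P.z (P.n + 1)) := by
    have hzn : P.z P.n < 1 := P.z_last ▸ P.z_lt P.n (P.n + 1) (by omega) le_rfl
    filter_upwards [eventually_const_mul_lt 1 (sub_pos.2 hzn)] with ε hε y hy
    obtain ⟨hy01, hyε, hy1⟩ := hy
    rw [abs_sub_comm, abs_of_nonneg (sub_nonneg.2 hy01.2)] at hyε
    exact ⟨by linarith, P.z_last ▸ lt_of_le_of_ne hy01.2 hy1⟩
  filter_upwards [hB₀.eventually_hasCollarBranch hcollar₀, hB₁.eventually_hasCollarBranch hcollar₁]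
    with ε h₀ h₁
  rintro e (rfl | rfl)
  exacts [h₀, h₁]

lemma exists_isMonotoneBranch_z_one :
    ∃ a b M, IsMonotoneBranch f a b (P.z 1) M ∧ Ioo a b ⊆ Icc 0 1 ∧
      ∀ᶠ ε in 𝓝[>] (0 : ℝ), ∀ y, |y - P.z 1| < 2 * ε → |f y - M| < 3 * ε → y ∈ Ioo a b := by
  have hn := P.one_le
  obtain ⟨L, R, hL, hR, hLR⟩ := P.jump 1 le_rfl hn
  have h01 := P.z_lt 0 1 one_pos (by omega)
  have h12 := P.z_lt 1 2 one_lt_two (by omega)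
  have hleft : IsMonotoneBranch f (P.z 0) (P.z 1) (P.z 1) L :=
    ⟨h01, Or.inr rfl, P.strictMonoOn_or_strictAntiOn 0 (Nat.zero_le _),
      by rwa [nhdsWithin_Ioo_eq_nhdsLT h01]⟩
  have hright : IsMonotoneBranch f (P.z 1) (P.z 2) (P.z 1) R :=
    ⟨h12, Or.inl rfl, P.strictMonoOn_or_strictAntiOn 1 hn, by rwa [nhdsWithin_Ioo_eq_nhdsGT h12]⟩
  have hU : insert (P.z 1) (Ioo (P.z 0) (P.z 1) ∪ Ioo (P.z 1) (P.z 2)) ∈ 𝓝 (P.z 1) := by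
    refine mem_of_superset (Ioo_mem_nhds h01 h12) fun y hy => ?_
    rcases lt_trichotomy y (P.z 1) with h | rfl | h
    exacts [Or.inr (Or.inl ⟨hy.1, h⟩), Or.inl rfl, Or.inr (Or.inr ⟨h, hy.2⟩)]
  by_cases hv : f (P.z 1) = L
  · exact ⟨_, _, R, hright, P.Ioo_subset_Icc hn,
      eventually_mem_of_abs_sub_lt (by rwa [union_comm]) hleft.tendsto hLR.symm (hv ▸ hLR)⟩
  · exact ⟨_, _, L, hleft, P.Ioo_subset_Icc (Nat.zero_le _),
      eventually_mem_of_abs_sub_lt hU hright.tendsto hLR hv⟩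

end PCMPartition

def IsPseudoOrbit (f : ℝ → ℝ) (δ : ℝ) (x : ℕ → ℝ) : Prop :=
  (∀ i, x i ∈ Icc (0 : ℝ) 1) ∧ ∀ i, |f (x i) - x (i + 1)| < δ

def ForcesShadowsInto (f : ℝ → ℝ) (ε δ : ℝ) (x : ℕ → ℝ) (s : ℕ) (I : Set ℝ) : Prop :=
  ∀ X, IsPseudoOrbit f δ X → (∀ i ≤ s, X i = x i) →
    ∀ z ∈ Icc (0 : ℝ) 1, (∀ i, |f^[i] z - X i| < ε) → f^[s] z ∈ I

def splice (f : ℝ → ℝ) (x : ℕ → ℝ) (s : ℕ) (w : ℝ) : ℕ → ℝ :=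
  fun i => if i ≤ s then x i else f^[i - (s + 1)] w

section Splice

variable {f : ℝ → ℝ} {x : ℕ → ℝ} {s : ℕ} {w : ℝ}

lemma splice_of_le {i : ℕ} (hi : i ≤ s) : splice f x s w i = x i := if_pos hi

lemma splice_add_succ (k : ℕ) : splice f x s w (s + 1 + k) = f^[k] w := by
  simp [splice, show ¬ s + 1 + k ≤ s by omega]

lemma splice_succ_of_lt {i : ℕ} (hi : s < i) : splice f x s w (i + 1) = f (splice f x s w i) := by
  obtain ⟨k, rfl⟩ := Nat.exists_eq_add_of_lt hi
  rw [add_right_comm s k, splice_add_succ, add_assoc, splice_add_succ, iterate_succ_apply']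

lemma isPseudoOrbit_splice {δ : ℝ} (hf : MapsTo f (Icc 0 1) (Icc 0 1)) (hδ : 0 < δ)
    (hx : ∀ i ≤ s, x i ∈ Icc 0 1) (hxδ : ∀ i < s, |f (x i) - x (i + 1)| < δ)
    (hw : w ∈ Icc 0 1) (hjump : |f (x s) - w| < δ) : IsPseudoOrbit f δ (splice f x s w) := by
  refine ⟨fun i => ?_, fun i => ?_⟩
  · unfold splice
    split_ifs with hi
    exacts [hx i hi, hf.iterate _ hw]
  · rcases lt_trichotomy i s with hi | rfl | hi
    · rw [splice_of_le hi.le, splice_of_le hi]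
      exact hxδ i hi
    · simpa [splice_of_le le_rfl, splice_add_succ 0] using hjump
    · rw [splice_succ_of_lt hi, sub_self, abs_zero]
      exact hδ

lemma abs_iterate_sub_lt_of_splice {ε z : ℝ} (h : ∀ i, |f^[i] z - splice f x s w i| < ε) (k : ℕ) :
    |f^[k] (f^[s + 1] z) - f^[k] w| < ε := by
  rw [← iterate_add_apply, add_comm k, ← splice_add_succ (f := f) (x := x) (s := s) (w := w) k]
  exact h _

end Splice

lemma ForcesShadowsInto.mono {f : ℝ → ℝ} {ε δ : ℝ} {x : ℕ → ℝ} {s : ℕ} {I J : Set ℝ}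
    (h : ForcesShadowsInto f ε δ x s I) (hIJ : I ⊆ J) : ForcesShadowsInto f ε δ x s J :=
  fun X hX hXx z hz hzX => hIJ (h X hX hXx z hz hzX)

lemma ForcesShadowsInto.succ {f : ℝ → ℝ} {ε δ M : ℝ} {x : ℕ → ℝ} {s : ℕ} {J : Set ℝ}
    (hf : MapsTo f (Icc 0 1) (Icc 0 1)) (h : ForcesShadowsInto f ε δ x s J)
    (hJ : ∀ y ∈ J, f y ≠ M) (hxM : x (s + 1) = M) :
    ForcesShadowsInto f ε δ x (s + 1) (collar M ε) := by
  intro X hX hXx z hz hzX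
  have hy := h X hX (fun i hi => hXx i (by omega)) z hz hzX
  have hnext := hzX (s + 1)
  rw [iterate_succ_apply', hXx (s + 1) le_rfl, hxM] at hnext
  rw [iterate_succ_apply']
  exact ⟨hf (hf.iterate s hz), hnext, hJ _ hy⟩

structure ShadowingContext (f : ℝ → ℝ) (ε δ : ℝ) : Prop where
  mapsTo : MapsTo f (Icc 0 1) (Icc 0 1)
  delta_pos : 0 < δ
  delta_le : δ ≤ ε
  shadow : ∀ x, IsPseudoOrbit f δ x → ∃ z ∈ Icc (0 : ℝ) 1, ∀ i, |f^[i] z - x i| < ε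
  expansiveOff : ∃ B : Set ℝ, B.Countable ∧ ExpansiveOff f (2 * ε) B

namespace ShadowingContext

variable {f : ℝ → ℝ} {ε δ : ℝ} {x : ℕ → ℝ} {s : ℕ}

lemma eps_pos (C : ShadowingContext f ε δ) : 0 < ε := C.delta_pos.trans_le C.delta_le

/-- A shadow of the jump to `w` ends up `ε`-tracking `w` from a point outside `(a, b)`; by
expansivity this happens for at most countably many `w`. -/
lemma not_forcesShadowsInto_preimage_compl (C : ShadowingContext f ε δ)
    (hx : IsPseudoOrbit f δ x) {a b : ℝ} (hab : a < b) (hW : Ioo a b ⊆ Icc 0 1)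
    (hjump : ∀ w ∈ Ioo a b, |f (x s) - w| < δ) :
    ¬ ForcesShadowsInto f ε δ x s (f ⁻¹' (Ioo a b)ᶜ) := by
  intro hfor
  have htrack : ∀ w ∈ Ioo a b, ∃ y ∈ Icc (0 : ℝ) 1, y ∉ Ioo a b ∧
      ∀ k, |f^[k] y - f^[k] w| < ε := by
    intro w hw
    have hX := isPseudoOrbit_splice C.mapsTo C.delta_pos (fun i _ => hx.1 i) (fun i _ => hx.2 i)
      (hW hw) (hjump w hw)
    obtain ⟨z, hz, hzX⟩ := C.shadow _ hX
    refine ⟨f^[s + 1] z, C.mapsTo.iterate _ hz, ?_, abs_iterate_sub_lt_of_splice hzX⟩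
    rw [iterate_succ_apply']
    exact hfor _ hX (fun i hi => splice_of_le hi) z hz hzX
  choose! Y hYI hYW hY using htrack
  obtain ⟨B, hB, hexp⟩ := C.expansiveOff
  have hε := C.eps_pos
  have hYB : MapsTo Y (Ioo a b \ B) B := fun w hw => by
    by_contra hYw
    have hYw : Y w = w := hexp _ ⟨hYI w hw.1, hYw⟩ w ⟨hW hw.1, hw.2⟩ fun k => by
      linarith [hY w hw.1 k]
    exact hYW w hw.1 (by rw [hYw]; exact hw.1)
  have hinj : InjOn Y (Ioo a b \ B) := fun w hw w' hw' hYww' =>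
    hexp w ⟨hW hw.1, hw.2⟩ w' ⟨hW hw'.1, hw'.2⟩ fun k => by
      have h := abs_sub_le (f^[k] w) (f^[k] (Y w)) (f^[k] w')
      have h' := hY w' hw'.1 k
      rw [abs_sub_comm (f^[k] w) (f^[k] (Y w))] at h
      rw [← hYww'] at h'
      linarith [hY w hw.1 k]
  have hcount : (Ioo a b).Countable :=
    ((hYB.countable_of_injOn hinj hB).union hB).mono fun w hw => by
      by_cases hwB : w ∈ B
      exacts [Or.inr hwB, Or.inl ⟨hw, hwB⟩]
  exact (Cardinal.Real.Ioo_countable_iff.1 hcount).not_gt hab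

/-- Otherwise there is room beyond `M`, away from the images of the forced positions, for an
interval of jump targets that no shadow can follow. -/
lemma eq_zero_or_eq_one (C : ShadowingContext f ε δ) (hx : IsPseudoOrbit f δ x) {J : Set ℝ} {M : ℝ}
    (hfor : ForcesShadowsInto f ε δ x s J) (hside : (∀ y ∈ J, f y < M) ∨ (∀ y ∈ J, M < f y))
    (hM : M ∈ Icc 0 1) (hxM : |f (x s) - M| < δ / 2) : M = 0 ∨ M = 1 := by
  have hδ := C.delta_pos
  rw [abs_sub_lt_iff] at hxM
  rcases hside with hlt | hgt
  · refine Or.inr (by_contra fun hM1 => C.not_forcesShadowsInto_preimage_compl hx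
      (lt_min (lt_of_le_of_ne hM.2 hM1) (by linarith) : M < min 1 (M + δ / 2))
      (fun w hw => ⟨hM.1.trans hw.1.le, hw.2.le.trans (min_le_left _ _)⟩) (fun w hw => ?_)
      (hfor.mono fun y hy hfy => (hlt y hy).not_gt hfy.1))
    have := hw.2.trans_le (min_le_right _ _)
    rw [abs_sub_lt_iff]
    constructor <;> linarith [hw.1]
  · refine Or.inl (by_contra fun hM0 => C.not_forcesShadowsInto_preimage_compl hx
      (max_lt (lt_of_le_of_ne hM.1 (Ne.symm hM0)) (by linarith) : max 0 (M - δ / 2) < M)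
      (fun w hw => ⟨(le_max_left _ _).trans hw.1.le, hw.2.le.trans hM.2⟩) (fun w hw => ?_)
      (hfor.mono fun y hy hfy => (hgt y hy).not_gt hfy.2))
    have := (le_max_right _ _).trans_lt hw.1
    rw [abs_sub_lt_iff]
    constructor <;> linarith [hw.2]

lemma false_of_forcesShadowsInto_far (C : ShadowingContext f ε δ) (hx : IsPseudoOrbit f δ x)
    {I : Set ℝ} (hfor : ForcesShadowsInto f ε δ x s I) (hnext : x (s + 1) = f (x s))
    (hfar : ∀ y ∈ I, ε ≤ |f y - f (x s)|) : False := by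
  obtain ⟨z, hz, hzx⟩ := C.shadow x hx
  have h1 := hfar _ (hfor x hx (fun _ _ => rfl) z hz hzx)
  have h2 := hzx (s + 1)
  rw [iterate_succ_apply', hnext] at h2
  linarith

lemma forcesShadowsInto_collar_succ (C : ShadowingContext f ε δ)
    (hend : ∀ e ∈ ({0, 1} : Set ℝ), HasCollarBranch f ε e) (hx : IsPseudoOrbit f δ x)
    (hnext : x (s + 1) = f (x s)) (hxs : x s ∈ ({0, 1} : Set ℝ))
    (hfor : ForcesShadowsInto f ε δ x s (collar (x s) ε)) :
    ∃ a b, IsMonotoneBranch f a b (x s) (f (x s)) ∧ collar (x s) ε ⊆ Ioo a b ∧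
      x (s + 1) ∈ ({0, 1} : Set ℝ) ∧ ForcesShadowsInto f ε δ x (s + 1) (collar (x (s + 1)) ε) := by
  obtain ⟨a, b, M, hB, hsub, hfar⟩ := hend _ hxs
  obtain rfl : f (x s) = M :=
    by_contra fun hne => C.false_of_forcesShadowsInto_far hx hfor hnext (hfar hne)
  have hforJ := hfor.mono hsub
  rw [hnext]
  refine ⟨a, b, hB, hsub, ?_, hforJ.succ C.mapsTo (fun y hy => hB.ne_of_mem hy) hnext⟩
  rcases C.eq_zero_or_eq_one hx hforJ hB.forall_lt_or_forall_gt (C.mapsTo (hx.1 s))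
    (by simpa using half_pos C.delta_pos) with h | h <;> simp [h]

lemma false_of_forcesShadowsInto_collar (C : ShadowingContext f ε δ) (htr : IntervalTransitive f)
    {c : ℝ} (hc : c ∈ Icc ε (1 - ε)) (hend : ∀ e ∈ ({0, 1} : Set ℝ), HasCollarBranch f ε e)
    (hx : IsPseudoOrbit f δ x) (horb : ∀ i ≥ s, x (i + 1) = f (x i))
    (hxs : x s ∈ ({0, 1} : Set ℝ)) (hfor : ForcesShadowsInto f ε δ x s (collar (x s) ε)) :
    False := by
  have hall : ∀ k, x (s + k) ∈ ({0, 1} : Set ℝ) ∧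
      ForcesShadowsInto f ε δ x (s + k) (collar (x (s + k)) ε) := by
    intro k
    induction k with
    | zero => exact ⟨hxs, hfor⟩
    | succ k ih =>
      obtain ⟨-, -, -, -, h⟩ :=
        C.forcesShadowsInto_collar_succ hend hx (horb (s + k) (by omega)) ih.1 ih.2
      exact h
  obtain ⟨z, hz, hzx⟩ := C.shadow x hx
  have hpos : ∀ k, f^[k] (f^[s] z) ∈ collar (x (s + k)) ε := fun k => by
    rw [← iterate_add_apply, Nat.add_comm k s]
    exact (hall k).2 x hx (fun _ _ => rfl) z hz hzx
  have horbk : ∀ k, f^[k] (x s) = x (s + k) := by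
    intro k
    induction k with
    | zero => rfl
    | succ k ih => rw [iterate_succ_apply', ih]; exact (horb (s + k) (by omega)).symm
  have hε := C.eps_pos
  obtain ⟨k, hk⟩ := htr.exists_mem_uIoo_iterate ⟨hε.trans_le hc.1, by linarith [hc.2]⟩
    (C.mapsTo.iterate s hz) (hx.1 s) (hpos 0).2.2 fun k => by
      obtain ⟨a, b, hB, hsub, -⟩ :=
        C.forcesShadowsInto_collar_succ hend hx (horb (s + k) (by omega)) (hall k).1 (hall k).2
      have hsub' := hB.uIcc_subset_insert (hsub (hpos k))
      simp only [iterate_succ_apply', horbk]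
      exact mapsTo_uIoo_of_strictMonoOn_or_strictAntiOn
        (hB.strictMonoOn_insert_or_strictAntiOn_insert.imp (·.mono hsub') (·.mono hsub'))
  rw [horbk, uIoo_comm] at hk
  have hck := abs_sub_left_of_mem_uIcc (uIoo_subset_uIcc_self hk)
  have hdist := (hpos k).2.1
  rcases (hall k).1 with h | h <;> rw [h] at hck hdist <;>
    linarith [le_abs_self (c - 0), neg_abs_le (c - 1), hc.1, hc.2]

lemma false_of_isMonotoneBranch (C : ShadowingContext f ε δ) (htr : IntervalTransitive f)
    {c : ℝ} (hc : c ∈ Icc ε (1 - ε)) (hend : ∀ e ∈ ({0, 1} : Set ℝ), HasCollarBranch f ε e)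
    {a b d M : ℝ} (hB : IsMonotoneBranch f a b d M) (hab : Ioo a b ⊆ Icc 0 1)
    (hexcl : ∀ y, |y - d| < 2 * ε → |f y - M| < 3 * ε → y ∈ Ioo a b) : False := by
  have hδ := C.delta_pos
  have hδε := C.delta_le
  obtain ⟨p, hp, hpd, hpM⟩ := hB.exists_near C.eps_pos (half_pos hδ)
  have hM := hB.mem_of_mapsTo isClosed_Icc (C.mapsTo.mono_left hab)
  set x := splice f (fun _ => p) 0 M
  have hx : IsPseudoOrbit f δ x := isPseudoOrbit_splice C.mapsTo hδ (fun _ _ => hab hp)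
    (fun i hi => absurd hi (Nat.not_lt_zero i)) hM (by linarith)
  have hx0 : x 0 = p := splice_of_le le_rfl
  have hx1 : x 1 = M := splice_add_succ 0
  have hfor : ForcesShadowsInto f ε δ x 0 (Ioo a b) := by
    intro X hX hXx z hz hzX
    have h0 := hzX 0
    have h1 := hzX 1
    have hX1 := hX.2 0
    rw [hXx 0 le_rfl, hx0] at h0 hX1
    rw [iterate_zero_apply] at h0 ⊢
    rw [iterate_one] at h1
    refine hexcl z ?_ ?_
    · linarith [abs_sub_le z p d]
    · linarith [abs_sub_le (f z) (X 1) (f p), abs_sub_le (f z) (f p) M, abs_sub_comm (X 1) (f p)]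
  have h01 := C.eq_zero_or_eq_one hx hfor hB.forall_lt_or_forall_gt hM (by rwa [hx0])
  refine C.false_of_forcesShadowsInto_collar htr hc hend hx (s := 1)
    (fun i hi => splice_succ_of_lt hi) ?_ ?_
  · rw [hx1]
    rcases h01 with h | h <;> simp [h]
  · rw [hx1]
    exact hfor.succ C.mapsTo (fun y hy => hB.ne_of_mem hy) hx1

end ShadowingContext

theorem transitive_pcm_no_shadowing
    (f : ℝ → ℝ) (hf : Set.MapsTo f (Icc 0 1) (Icc 0 1))
    (hpcm : IsPCMMap f) (htrans : IntervalTransitive f) :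
    ¬ ShadowingOn f (Icc 0 1) := by
  intro hsh
  obtain ⟨P⟩ := hpcm.nonempty_pcmPartition
  obtain ⟨a, b, M, hB, hab, hnear⟩ := P.exists_isMonotoneBranch_z_one
  obtain ⟨ε, ⟨⟨⟨hexp, hexcl⟩, hend⟩, hc⟩, hε⟩ := ((((P.eventually_expansiveOff htrans hf).and
    hnear).and (P.eventually_hasCollarBranch hf)).and
    (eventually_mem_Icc_sub P.z_one_mem_Ioo)).and self_mem_nhdsWithin |>.exists
  obtain ⟨δ, hδ, hshδ⟩ := hsh ε hε
  have C : ShadowingContext f ε (min δ ε) :=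
    ⟨hf, lt_min hδ hε, min_le_right _ _,
      fun x hx => hshδ x hx.1 fun i => (hx.2 i).trans_le (min_le_left _ _),
      _, P.countable_setOf_exists_iterate_mem_breaks hf, hexp⟩
  exact C.false_of_isMonotoneBranch htrans hc hend hB hab hexcl
end

section
/- For every β ∈ (1,2] and α ∈ [0, 2−β], the β-transformation T_{β,α}(x) = βx + α (mod 1) on [0,1] does not have finite shadowing. -/
/-- `f` has finite shadowing on `K`. -/
def FiniteShadowingOn (f : ℝ → ℝ) (K : Set ℝ) : Prop :=
  ∀ ε > (0:ℝ), ∃ δ > (0:ℝ), ∀ (N : ℕ) (x : ℕ → ℝ), (∀ i ≤ N, x i ∈ K) →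
    (∀ i < N, |f (x i) - x (i + 1)| < δ) →
    ∃ z ∈ K, ∀ i ≤ N, |f^[i] z - x i| < ε

/-- The β-transformation `x ↦ βx + α (mod 1)`. -/
noncomputable def betaMap (β α : ℝ) : ℝ → ℝ := fun x => Int.fract (β * x + α)

private lemma fract_self' {y : ℝ} (h0 : 0 ≤ y) (h1 : y < 1) : Int.fract y = y :=
  Int.fract_eq_self.mpr ⟨h0, h1⟩

private lemma fract_mid {y : ℝ} (h1 : 1 ≤ y) (h2 : y < 2) : Int.fract y = y - 1 := by
  have h := Int.fract_sub_intCast y (1 : ℤ)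
  push_cast at h
  rw [← h]
  exact fract_self' (by linarith) (by linarith)

set_option maxHeartbeats 1600000 in
theorem betaMap_no_finite_shadowing
    (β α : ℝ) (hβ1 : 1 < β) (hβ2 : β ≤ 2) (hα0 : 0 ≤ α) (hα1 : α ≤ 2 - β) :
    ¬ FiniteShadowingOn (betaMap β α) (Set.Icc 0 1) := by
  intro hFS
  set T := betaMap β α with hT
  have hβ0 : (0:ℝ) < β := by linarith
  have hTdef : ∀ y : ℝ, T y = Int.fract (β * y + α) := fun y => rfl
  have hTmap : ∀ y : ℝ, 0 ≤ T y ∧ T y < 1 := fun y =>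
    ⟨Int.fract_nonneg _, Int.fract_lt_one _⟩
  set ε : ℝ := (β - 1) / (6 * β) with hεdef
  have hεpos : 0 < ε := div_pos (by linarith) (by linarith)
  have h6 : 6 * β * ε = β - 1 := by
    rw [hεdef]; field_simp
  have hβε : β * ε ≤ 1/6 := by nlinarith
  have hε6 : ε ≤ 1/6 := by nlinarith
  obtain ⟨δ, hδpos, H⟩ := hFS ε hεpos
  by_cases hcrit : β + α < 2
  · -- main case : β + α < 2
    set θ : ℝ := min δ (2 - β - α) / 2 with hθdef
    have hθpos : 0 < θ := by
      rw [hθdef]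
      have := lt_min hδpos (by linarith : (0:ℝ) < 2 - β - α)
      linarith
    have hθδ : θ < δ := by
      rw [hθdef]
      have := min_le_left δ (2 - β - α)
      linarith
    have hθγ : 2 * θ ≤ 2 - β - α := by
      rw [hθdef]
      have := min_le_right δ (2 - β - α)
      linarith
    obtain ⟨m, hm⟩ := pow_unbounded_of_one_lt (2 * ε / θ) hβ1
    set w : ℝ := β + α - 1 + θ with hwdef
    have hw0 : 0 ≤ w := by rw [hwdef]; linarith
    have hw1 : w < 1 := by rw [hwdef]; linarith
    have hwit : ∀ k, 0 ≤ T^[k] w ∧ T^[k] w < 1 := by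
      intro k
      cases k with
      | zero => exact ⟨hw0, hw1⟩
      | succ k => rw [Function.iterate_succ_apply']; exact hTmap _
    set x : ℕ → ℝ := fun i => if i = 0 then 1 else T^[i-1] w with hx
    have hx0 : x 0 = 1 := by simp [hx]
    have hxs : ∀ i, x (i+1) = T^[i] w := by intro i; simp [hx]
    have hT1 : T 1 = β + α - 1 := by
      rw [hTdef, mul_one]
      exact fract_mid (by linarith) (by linarith)
    have hmem : ∀ i ≤ m + 1, x i ∈ Set.Icc (0:ℝ) 1 := by
      intro i _
      cases i with
      | zero => rw [hx0]; exact ⟨zero_le_one, le_rfl⟩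
      | succ i => rw [hxs]; exact ⟨(hwit i).1, (hwit i).2.le⟩
    have hpseudo : ∀ i < m + 1, |T (x i) - x (i+1)| < δ := by
      intro i _
      cases i with
      | zero =>
        rw [hx0, hxs 0, Function.iterate_zero_apply, hT1]
        have : β + α - 1 - w = -θ := by rw [hwdef]; ring
        rw [this, abs_neg, abs_of_pos hθpos]
        exact hθδ
      | succ i =>
        rw [hxs i, hxs (i+1), Function.iterate_succ_apply', sub_self, abs_zero]
        exact hδpos
    obtain ⟨z, hzK, hsh⟩ := H (m+1) x hmem hpseudo
    have h0 : |z - 1| < ε := by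
      have := hsh 0 (Nat.zero_le _)
      rwa [Function.iterate_zero_apply, hx0] at this
    have hz1le : z ≤ 1 := hzK.2
    have hzgt : 1 - ε < z := by
      have := abs_lt.mp h0; linarith
    have hbz : β * (1 - ε) ≤ β * z := mul_le_mul_of_nonneg_left hzgt.le hβ0.le
    have hbz1 : β * z ≤ β := by nlinarith
    have hTz : T z = β * z + α - 1 := by
      rw [hTdef]
      exact fract_mid (by nlinarith) (by nlinarith)
    have hTzle : T z ≤ β + α - 1 := by rw [hTz]; linarith
    -- pinning induction
    have key : ∀ i, i ≤ m → T^[i+1] z - T^[i] w = β ^ i * (T z - w) := by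
      intro i
      induction i with
      | zero => intro _; simp
      | succ i ih =>
        intro him
        have heq := ih (Nat.le_of_succ_le him)
        have hab : |T^[i+1] z - T^[i] w| < ε := by
          have := hsh (i+1) (by omega)
          rwa [hxs i] at this
        have ha : 0 ≤ T^[i+1] z ∧ T^[i+1] z < 1 := by
          rw [Function.iterate_succ_apply']; exact hTmap _
        have hb := hwit i
        have hnext : |T^[i+1+1] z - T^[i+1] w| < ε := by
          have := hsh (i+1+1) (by omega)
          rwa [hxs (i+1)] at this
        rw [Function.iterate_succ_apply' T (i+1) z, Function.iterate_succ_apply' T i w]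
        rw [Function.iterate_succ_apply' T (i+1) z, Function.iterate_succ_apply' T i w] at hnext
        have h1 := abs_lt.mp hab
        rcases le_or_gt 1 (β * (T^[i+1] z) + α) with hA | hA <;>
          rcases le_or_gt 1 (β * (T^[i] w) + α) with hB | hB
        · have e1 : T (T^[i+1] z) = β * T^[i+1] z + α - 1 := by
            rw [hTdef]; exact fract_mid hA (by nlinarith [mul_le_mul_of_nonneg_left ha.2.le hβ0.le])
          have e2 : T (T^[i] w) = β * T^[i] w + α - 1 := by
            rw [hTdef]; exact fract_mid hB (by nlinarith [mul_le_mul_of_nonneg_left hb.2.le hβ0.le])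
          rw [e1, e2, pow_succ]
          linear_combination β * heq
        · exfalso
          have e1 : T (T^[i+1] z) = β * T^[i+1] z + α - 1 := by
            rw [hTdef]; exact fract_mid hA (by nlinarith [mul_le_mul_of_nonneg_left ha.2.le hβ0.le])
          have e2 : T (T^[i] w) = β * T^[i] w + α := by
            rw [hTdef]; exact fract_self' (by nlinarith [mul_nonneg hβ0.le hb.1]) hB
          rw [e1, e2] at hnext
          have h2 := abs_lt.mp hnext
          nlinarith [mul_le_mul_of_nonneg_left h1.2.le hβ0.le]
        · exfalso
          have e1 : T (T^[i+1] z) = β * T^[i+1] z + α := by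
            rw [hTdef]; exact fract_self' (by nlinarith [mul_nonneg hβ0.le ha.1]) hA
          have e2 : T (T^[i] w) = β * T^[i] w + α - 1 := by
            rw [hTdef]; exact fract_mid hB (by nlinarith [mul_le_mul_of_nonneg_left hb.2.le hβ0.le])
          rw [e1, e2] at hnext
          have h2 := abs_lt.mp hnext
          have hba : T^[i] w - T^[i+1] z ≤ ε := by linarith
          nlinarith [mul_le_mul_of_nonneg_left hba hβ0.le]
        · have e1 : T (T^[i+1] z) = β * T^[i+1] z + α := by
            rw [hTdef]; exact fract_self' (by nlinarith [mul_nonneg hβ0.le ha.1]) hA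
          have e2 : T (T^[i] w) = β * T^[i] w + α := by
            rw [hTdef]; exact fract_self' (by nlinarith [mul_nonneg hβ0.le hb.1]) hB
          rw [e1, e2, pow_succ]
          linear_combination β * heq
    have hpin : |T^[m+1] z - T^[m] w| < ε := by
      have := hsh (m+1) le_rfl
      rwa [hxs m] at this
    rw [key m le_rfl, abs_mul, abs_pow, abs_of_pos hβ0] at hpin
    have hpm : (0:ℝ) < β ^ m := pow_pos hβ0 m
    have h2e : 2 * ε < β ^ m * θ := by
      rw [div_lt_iff₀ hθpos] at hm; linarith
    have habs : 2 * |T z - w| < θ := by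
      have hh : β ^ m * (2 * |T z - w|) < β ^ m * θ := by nlinarith
      exact lt_of_mul_lt_mul_left hh hpm.le
    have hge : w - T z ≤ |T z - w| := by
      have := neg_abs_le (T z - w); linarith
    have : θ ≤ w - T z := by rw [hwdef]; linarith
    linarith [abs_nonneg (T z - w)]
  · -- boundary case : β + α = 2
    have hc2 : β + α = 2 := le_antisymm (by linarith) (not_lt.mp hcrit)
    set c : ℝ := (β - 1)/β with hcdef
    have hcpos : 0 < c := div_pos (by linarith) hβ0
    have hbc : β * c = β - 1 := by rw [hcdef]; field_simp
    have hc1 : c ≤ 1/2 := by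
      rw [hcdef, div_le_iff₀ hβ0]; linarith
    set d : ℝ := min δ c / 3 with hddef
    have hdpos : 0 < d := by
      rw [hddef]
      have := lt_min hδpos hcpos
      linarith
    have hdc : 3 * d ≤ c := by
      rw [hddef]; have := min_le_right δ c; linarith
    have hdδ : 3 * d ≤ δ := by
      rw [hddef]; have := min_le_left δ c; linarith
    have hbd : β * d ≤ 2 * d := mul_le_mul_of_nonneg_right hβ2 hdpos.le
    set x : ℕ → ℝ := fun i => if i = 0 then c - d else if i = 1 then 1 else 0 with hx
    have hx0 : x 0 = c - d := by simp [hx]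
    have hx1 : x 1 = 1 := by simp [hx]
    have hx2 : x 2 = 0 := by simp [hx]
    have hp0 : T (c - d) = 1 - β * d := by
      rw [hTdef]
      have he : β * (c - d) + α = 1 - β * d := by
        have hα2 : α = 2 - β := by linarith
        rw [hα2]; linear_combination hbc
      rw [he]
      exact fract_self' (by nlinarith) (by nlinarith)
    have hp1 : T 1 = 0 := by
      rw [hTdef, mul_one, hc2]
      norm_num [Int.fract]
    have hmem : ∀ i ≤ 2, x i ∈ Set.Icc (0:ℝ) 1 := by
      intro i _
      match i with
      | 0 => rw [hx0]; constructor <;> [linarith; linarith]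
      | 1 => rw [hx1]; exact ⟨zero_le_one, le_rfl⟩
      | (n+2) =>
        have : x (n+2) = 0 := by simp [hx]
        rw [this]; exact ⟨le_rfl, zero_le_one⟩
    have hpseudo : ∀ i < 2, |T (x i) - x (i+1)| < δ := by
      intro i hi
      interval_cases i
      · rw [hx0, hx1, hp0]
        have : 1 - β * d - 1 = -(β * d) := by ring
        rw [this, abs_neg, abs_of_pos (mul_pos hβ0 hdpos)]
        linarith
      · rw [hx1, hx2, hp1, sub_self, abs_zero]
        exact hδpos
    obtain ⟨z, hzK, hsh⟩ := H 2 x hmem hpseudo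
    have h1 : |T z - 1| < ε := by
      have := hsh 1 (by norm_num)
      rwa [Function.iterate_one, hx1] at this
    have h2 : |T (T z)| < ε := by
      have := hsh 2 le_rfl
      rwa [show T^[2] z = T (T z) from rfl, hx2, sub_zero] at this
    have hy1 : T z < 1 := (hTmap z).2
    have hy : 1 - ε < T z := by have := abs_lt.mp h1; linarith
    have hby : β * (1 - ε) ≤ β * T z := mul_le_mul_of_nonneg_left hy.le hβ0.le
    have hby1 : β * T z ≤ β := by nlinarith
    have hTy : T (T z) = β * T z + α - 1 := by
      rw [hTdef]
      exact fract_mid (by nlinarith) (by nlinarith)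
    have := abs_lt.mp h2
    nlinarith
end

section
/- For every β ∈ (1,2] and α ∈ [0, 2−β], the β-transformation T_{β,α}(x) = βx + α (mod 1) on [0,1] does not have shadowing. -/
theorem ShadowingOn.exists_shadow_of_approx {f : ℝ → ℝ} {K : Set ℝ} (hf : ShadowingOn f K)
    (hK : Set.MapsTo f K K) {p : ℝ} (hp : p ∈ K) {ε : ℝ} (hε : 0 < ε)
    (happrox : ∀ δ > 0, ∃ y ∈ K, |f y - p| < δ) :
    ∃ z ∈ K, ∀ k, |f^[k] (f z) - f^[k] p| < ε := by
  obtain ⟨δ, hδ, hshadow⟩ := hf ε hε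
  obtain ⟨y, hy, hyp⟩ := happrox δ hδ
  let x : ℕ → ℝ := fun
    | 0 => y
    | k + 1 => f^[k] p
  have hxK : ∀ i, x i ∈ K
    | 0 => hy
    | k + 1 => hK.iterate k hp
  have hpseudo : ∀ i, |f (x i) - x (i + 1)| < δ
    | 0 => hyp
    | k + 1 => by simpa [x, ← Function.iterate_succ_apply' f k p] using hδ
  obtain ⟨z, hz, hzx⟩ := hshadow x hxK hpseudo
  exact ⟨z, hz, fun k => by simpa [x, Function.iterate_succ_apply] using hzx (k + 1)⟩

theorem Int.fract_sub_fract_eq_sub_of_abs_lt {x y : ℝ}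
    (h : |(Int.fract x - Int.fract y) - (x - y)| < 1) : Int.fract x - Int.fract y = x - y := by
  have hfloor : (Int.fract x - Int.fract y) - (x - y) = ((⌊y⌋ - ⌊x⌋ : ℤ) : ℝ) := by
    rw [Int.fract, Int.fract]
    push_cast
    ring
  rw [hfloor, ← Int.cast_abs, ← Int.cast_one, Int.cast_lt, Int.abs_lt_one_iff] at h
  rw [← sub_eq_zero, hfloor, h, Int.cast_zero]

section betaMap

variable {β α : ℝ}

theorem betaMap_mem_Icc (x : ℝ) : betaMap β α x ∈ Set.Icc 0 1 :=
  ⟨Int.fract_nonneg _, (Int.fract_lt_one _).le⟩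

theorem exists_betaMap_near_one (hβ : 1 ≤ β) (hα0 : 0 ≤ α) (hα1 : α < 1) {δ : ℝ}
    (hδ : 0 < δ) : ∃ y ∈ Set.Icc (0 : ℝ) 1, |betaMap β α y - 1| < δ := by
  -- the witness solves `β y + α = 1 - t`, just below the value where `betaMap` wraps to `0`
  set t := min (δ / 2) (1 - α)
  have ht0 : 0 < t := lt_min (half_pos hδ) (sub_pos.2 hα1)
  have htδ : t < δ := (min_le_left _ _).trans_lt (half_lt_self hδ)
  have ht1 : t ≤ 1 - α := min_le_right _ _
  refine ⟨(1 - α - t) / β, ⟨by positivity, ?_⟩, ?_⟩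
  · rw [div_le_one (by linarith)]
    linarith
  · have hy : β * ((1 - α - t) / β) + α = 1 - t := by field_simp; ring
    rw [betaMap, hy, Int.fract_eq_self.2 ⟨by linarith, by linarith⟩, sub_sub_cancel_left,
      abs_neg, abs_of_pos ht0]
    exact htδ

theorem betaMap_sub_betaMap (hβ : 0 ≤ β) {ε a b : ℝ} (hε : (β + 1) * ε ≤ 1) (hab : |a - b| < ε)
    (hTab : |betaMap β α a - betaMap β α b| < ε) :
    betaMap β α a - betaMap β α b = β * (a - b) := by
  have hsub : (β * a + α) - (β * b + α) = β * (a - b) := by ring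
  refine (Int.fract_sub_fract_eq_sub_of_abs_lt ?_).trans hsub
  rw [hsub]
  calc |(Int.fract (β * a + α) - Int.fract (β * b + α)) - β * (a - b)|
      ≤ |Int.fract (β * a + α) - Int.fract (β * b + α)| + β * |a - b| := by
        rw [← abs_of_nonneg hβ, ← abs_mul, abs_of_nonneg hβ]
        exact abs_sub _ _
    _ < ε + β * ε := add_lt_add_of_lt_of_le hTab (mul_le_mul_of_nonneg_left hab.le hβ)
    _ ≤ 1 := by linarith

theorem betaMap_iterate_sub (hβ : 0 ≤ β) {ε a b : ℝ} (hε : (β + 1) * ε ≤ 1)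
    (hclose : ∀ k, |(betaMap β α)^[k] a - (betaMap β α)^[k] b| < ε) (k : ℕ) :
    (betaMap β α)^[k] a - (betaMap β α)^[k] b = β ^ k * (a - b) := by
  induction k with
  | zero => simp
  | succ k ih =>
    have hstep := hclose (k + 1)
    rw [Function.iterate_succ_apply', Function.iterate_succ_apply'] at hstep ⊢
    rw [betaMap_sub_betaMap hβ hε (hclose k) hstep, ih, pow_succ]
    ring

theorem eq_of_forall_abs_betaMap_iterate_sub_lt (hβ : 1 < β) {ε a b : ℝ}
    (hε : (β + 1) * ε ≤ 1)
    (hclose : ∀ k, |(betaMap β α)^[k] a - (betaMap β α)^[k] b| < ε) : a = b := by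
  by_contra hab
  have hpos : 0 < |a - b| := abs_pos.2 (sub_ne_zero.2 hab)
  obtain ⟨k, hk⟩ := pow_unbounded_of_one_lt (ε / |a - b|) hβ
  have hgrow := hclose k
  rw [betaMap_iterate_sub (by linarith) hε hclose, abs_mul,
    abs_of_pos (pow_pos (by linarith) k)] at hgrow
  rw [div_lt_iff₀ hpos] at hk
  exact hgrow.not_gt hk

end betaMap

theorem betaMap_no_shadowing_general
    (β α : ℝ) (hβ1 : 1 < β) (hα0 : 0 ≤ α) (hα1 : α ≤ 2 - β) :
    ¬ ShadowingOn (betaMap β α) (Set.Icc 0 1) := by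
  intro hshadow
  have hε : (β + 1) * (1 / (β + 1)) ≤ 1 := (mul_one_div_cancel (by positivity)).le
  obtain ⟨z, -, hz⟩ := hshadow.exists_shadow_of_approx (fun x _ => betaMap_mem_Icc x)
    ⟨zero_le_one, le_rfl⟩ (ε := 1 / (β + 1)) (by positivity)
    (fun δ hδ => exists_betaMap_near_one hβ1.le hα0 (by linarith) hδ)
  have hz1 : betaMap β α z = 1 := eq_of_forall_abs_betaMap_iterate_sub_lt hβ1 hε hz
  exact (Int.fract_lt_one _).ne hz1

theorem betaMap_no_shadowing
    (β α : ℝ) (hβ1 : 1 < β) (hβ2 : β ≤ 2) (hα0 : 0 ≤ α) (hα1 : α ≤ 2 - β) :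
    ¬ ShadowingOn (betaMap β α) (Set.Icc 0 1) :=
  betaMap_no_shadowing_general β α hβ1 hα0 hα1
end

section
/- If f : [0,1] → [0,1] has finite shadowing and T = f^n restricted to an interval J ⊆ [0,1] satisfies f^n(J) ⊆ J, then for every ε > 0 there exists δ > 0 such that for every finite δ-pseudo-orbit (x_0,…,x_N) of T in J there exists c ∈ [0,1] with |f^{ni}(c) − x_i| < ε for all 0 ≤ i ≤ N. -/
theorem finite_shadowing_of_return_map
    (f : ℝ → ℝ) (hf : Set.MapsTo f (Set.Icc 0 1) (Set.Icc 0 1))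
    (hshad : FiniteShadowingOn f (Set.Icc 0 1))
    (n : ℕ) (hn : 1 ≤ n) (J : Set ℝ) (hJsub : J ⊆ Set.Icc 0 1)
    (hJint : J.OrdConnected) (hJ : Set.MapsTo f^[n] J J) :
    ∀ ε > (0:ℝ), ∃ δ > (0:ℝ), ∀ (N : ℕ) (x : ℕ → ℝ), (∀ i ≤ N, x i ∈ J) →
      (∀ i < N, |f^[n] (x i) - x (i + 1)| < δ) →
      ∃ c ∈ Set.Icc (0:ℝ) 1, ∀ i ≤ N, |f^[n * i] c - x i| < ε := by
  intro ε hε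
  obtain ⟨δ, hδ, hδ'⟩ := hshad ε hε
  refine ⟨δ, hδ, ?_⟩
  intro N x hxJ hx
  have hn0 : 0 < n := hn
  -- interleaved pseudo-orbit
  set y : ℕ → ℝ := fun i => f^[i % n] (x (i / n)) with hy
  have hmem : ∀ i ≤ n * N, y i ∈ Set.Icc (0:ℝ) 1 := by
    intro i hi
    have hdiv : i / n ≤ N := by
      have := Nat.div_le_div_right (c := n) hi
      rwa [Nat.mul_div_cancel_left _ hn0] at this
    exact hf.iterate (i % n) (hJsub (hxJ _ hdiv))
  have hstep : ∀ i < n * N, |f (y i) - y (i + 1)| < δ := by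
    intro i hi
    have hdm : n * (i / n) + i % n = i := Nat.div_add_mod i n
    rcases Nat.lt_or_ge (i % n + 1) n with h | h
    · have h1 : (i + 1) % n = i % n + 1 := by
        conv_lhs => rw [← hdm]
        rw [add_assoc, Nat.mul_add_mod, Nat.mod_eq_of_lt h]
      have h2 : (i + 1) / n = i / n := by
        conv_lhs => rw [← hdm]
        rw [add_assoc, Nat.mul_add_div hn0, Nat.div_eq_of_lt h, add_zero]
      have : y (i + 1) = f (y i) := by
        simp only [hy, h1, h2, Function.iterate_succ_apply']
      rw [this, sub_self, abs_zero]
      exact hδ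
    · have hmlt : i % n < n := Nat.mod_lt _ hn0
      have hr : i % n + 1 = n := by omega
      have hi1 : i + 1 = n * (i / n) + n := by
        nth_rewrite 3 [← hr]
        rw [← add_assoc, hdm]
      have h1 : (i + 1) % n = 0 := by rw [hi1, Nat.mul_add_mod, Nat.mod_self]
      have h2 : (i + 1) / n = i / n + 1 := by
        rw [hi1, Nat.mul_add_div hn0, Nat.div_self hn0]
      have hq : i / n < N := by
        have : n * (i / n) < n * N := lt_of_le_of_lt (by omega) hi
        exact Nat.lt_of_mul_lt_mul_left this
      have hfy : f (y i) = f^[n] (x (i / n)) := by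
        simp only [hy, ← Function.iterate_succ_apply']
        rw [Nat.succ_eq_add_one, hr]
      have hy1 : y (i + 1) = x (i / n + 1) := by
        simp only [hy, h1, h2, Function.iterate_zero_apply]
      rw [hfy, hy1]
      exact hx _ hq
  obtain ⟨z, hz, hz'⟩ := hδ' (n * N) y hmem hstep
  refine ⟨z, hz, ?_⟩
  intro i hi
  have := hz' (n * i) (Nat.mul_le_mul_left n hi)
  simpa [hy, Nat.mul_mod_right, Nat.mul_div_cancel_left _ hn0] using this
end
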